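/- Let r ∈ ℕ, β_j ∈ (1/2,1] for j = 1,…,r, and let g^j be β_j-Hölder continuous on [s,s']. Define the iterated integral g^α_{s,t} = ∫_s^t ∫_s^{s₁} ⋯ ∫_s^{s_{r−1}} dg^1_{s_r} ⋯ dg^{r−1}_{s₂} dg^r_{s₁}. Then there is a constant K > 0 such that for all t, t' ∈ [s,s'] with t ≤ t', |g^α_{s,t'} − g^α_{s,t}| ≤ K (Π_{j=1}^r ‖g^j‖_{s,s',β_j}) (s'−s)^{β₁+⋯+β_{r−1}} (t'−t)^{β_r}. -/

import Mathlib

/-- The Riemann–Stieltjes integral `∫_a^b f dg`, defined as the limit of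
left-endpoint Riemann–Stieltjes sums along uniform partitions. -/
noncomputable def RS (f g : ℝ → ℝ) (a b : ℝ) : ℝ :=
  Filter.limUnder Filter.atTop fun n : ℕ =>
    ∑ k ∈ Finset.range n,
      f (a + k * (b - a) / n) * (g (a + (k + 1) * (b - a) / n) - g (a + k * (b - a) / n))

/-- The iterated Riemann–Stieltjes integral
`∫_a^b ∫_a^{s_r} ⋯ ∫_a^{s_2} dG_0(s_1) ⋯ dG_{r-1}(s_r)`,
where `G i` is the `i`-th integrator (index `0` innermost, `Fin.last` outermost). -/
noncomputable def iterRS : (r : ℕ) → (Fin r → ℝ → ℝ) → ℝ → ℝ → ℝ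
  | 0, _, _, _ => 1
  | (r + 1), G, a, b =>
      RS (fun u => iterRS r (fun i => G i.castSucc) a u) (G (Fin.last r)) a b

/-!
The integral is built by sewing. Inserting a point `m ∈ (u, v)` into a partition changes the
Riemann–Stieltjes sum by `(F m - F u) * (h v - h m) = O((v - u) ^ (γ + δ))` with `γ + δ > 1`.
Splitting `[a, b]` next to its midpoint and inducting on the number of points gives
`|S(P) - F a * (h b - h a)| ≤ K A B (b - a) ^ (γ + δ)` for every partition `P`, so the sum
over a partition of mesh `≤ μ` lies within `K A B μ ^ (γ + δ - 1) (b - a)` of the sum over any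
refinement. Hence the uniform sums defining `RS` converge, all partitions with mesh `→ 0` give
the same limit, `RS` is additive on intervals, and
`|∫_t^t' F dh| ≤ (|F t| + K A (t' - t) ^ γ) B (t' - t) ^ δ`.
By induction, `iterRS (r + 1)` vanishes at `s` and is Hölder with the constant of the previous
step, and this estimate adds one more integrator.
-/

open Set Filter Topology

noncomputable def nextPt (P : Finset ℝ) (x : ℝ) : ℝ :=
  if hx : (P.filter (x < ·)).Nonempty then (P.filter (x < ·)).min' hx else x

section NextPt

variable {P : Finset ℝ} {c x y z : ℝ}

theorem nextPt_le (hy : y ∈ P) (hxy : x < y) : nextPt P x ≤ y := by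
  have hy' : y ∈ P.filter (x < ·) := Finset.mem_filter.2 ⟨hy, hxy⟩
  rw [nextPt, dif_pos ⟨y, hy'⟩]
  exact Finset.min'_le _ _ hy'

theorem nextPt_mem_of_lt (hy : y ∈ P) (hxy : x < y) : nextPt P x ∈ P ∧ x < nextPt P x := by
  have hne : (P.filter (x < ·)).Nonempty := ⟨y, Finset.mem_filter.2 ⟨hy, hxy⟩⟩
  rw [nextPt, dif_pos hne]
  exact Finset.mem_filter.1 (Finset.min'_mem _ hne)

theorem nextPt_of_forall_le (h : ∀ y ∈ P, y ≤ x) : nextPt P x = x := by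
  rw [nextPt, dif_neg]
  rintro ⟨y, hy⟩
  rw [Finset.mem_filter] at hy
  exact (h y hy.1).not_gt hy.2

theorem le_nextPt (P : Finset ℝ) (x : ℝ) : x ≤ nextPt P x := by
  by_cases h : ∃ y ∈ P, x < y
  · obtain ⟨y, hy, hxy⟩ := h
    exact (nextPt_mem_of_lt hy hxy).2.le
  · push Not at h
    rw [nextPt_of_forall_le h]

theorem nextPt_mem (hx : x ∈ P) : nextPt P x ∈ P := by
  by_cases h : ∃ y ∈ P, x < y
  · obtain ⟨y, hy, hxy⟩ := h
    exact (nextPt_mem_of_lt hy hxy).1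
  · push Not at h
    rwa [nextPt_of_forall_le h]

theorem nextPt_eq_of_forall (hz : z ∈ P) (hxz : x < z) (hmin : ∀ y ∈ P, x < y → z ≤ y) :
    nextPt P x = z :=
  le_antisymm (nextPt_le hz hxz) (hmin _ (nextPt_mem_of_lt hz hxz).1 (nextPt_mem_of_lt hz hxz).2)

theorem nextPt_filter_ge (hcx : c ≤ x) : nextPt (P.filter (c ≤ ·)) x = nextPt P x := by
  by_cases h : ∃ y ∈ P, x < y
  · obtain ⟨y, hy, hxy⟩ := h
    obtain ⟨hnP, hxn⟩ := nextPt_mem_of_lt hy hxy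
    refine nextPt_eq_of_forall (Finset.mem_filter.2 ⟨hnP, hcx.trans hxn.le⟩) hxn ?_
    exact fun w hw hxw => nextPt_le (Finset.mem_filter.1 hw).1 hxw
  · push Not at h
    rw [nextPt_of_forall_le h, nextPt_of_forall_le fun w hw => h w (Finset.mem_filter.1 hw).1]

theorem nextPt_filter_le (hc : c ∈ P) (hxc : x < c) :
    nextPt (P.filter (· ≤ c)) x = nextPt P x := by
  obtain ⟨hnP, hxn⟩ := nextPt_mem_of_lt hc hxc
  refine nextPt_eq_of_forall (Finset.mem_filter.2 ⟨hnP, nextPt_le hc hxc⟩) hxn ?_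
  exact fun w hw hxw => nextPt_le (Finset.mem_filter.1 hw).1 hxw

end NextPt

-- `nextPt P x = x` at the largest point of `P`, so the last summand vanishes.
noncomputable def rsSum (F h : ℝ → ℝ) (P : Finset ℝ) : ℝ :=
  ∑ x ∈ P, F x * (h (nextPt P x) - h x)

section RSSum

variable {F h : ℝ → ℝ} {P : Finset ℝ} {c p q : ℝ}

@[simp] theorem rsSum_singleton (F h : ℝ → ℝ) (p : ℝ) : rsSum F h {p} = 0 := by
  simp [rsSum, nextPt_of_forall_le]

theorem rsSum_pair (hpq : p ≤ q) : rsSum F h {p, q} = F p * (h q - h p) := by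
  rcases hpq.eq_or_lt with rfl | hlt
  · simp
  · have hq : nextPt {p, q} q = q := nextPt_of_forall_le (by simp [hlt.le])
    have hp : nextPt {p, q} p = q := nextPt_eq_of_forall (by simp) hlt (by simp)
    rw [rsSum, Finset.sum_pair hlt.ne, hp, hq, sub_self, mul_zero, add_zero]

theorem rsSum_split (hc : c ∈ P) :
    rsSum F h P = rsSum F h (P.filter (· ≤ c)) + rsSum F h (P.filter (c ≤ ·)) := by
  have hlow : rsSum F h (P.filter (· ≤ c))
      = ∑ x ∈ P.filter (· < c), F x * (h (nextPt P x) - h x) := by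
    rw [rsSum, ← Finset.sum_filter_add_sum_filter_not _ (· < c), Finset.filter_filter]
    have hzero : ∀ x ∈ (P.filter (· ≤ c)).filter (¬ · < c),
        F x * (h (nextPt (P.filter (· ≤ c)) x) - h x) = 0 := by
      intro x hx
      simp only [Finset.mem_filter, not_lt] at hx
      rw [nextPt_of_forall_le fun y hy => (Finset.mem_filter.1 hy).2.trans hx.2, sub_self,
        mul_zero]
    rw [Finset.sum_eq_zero hzero, add_zero]
    refine Finset.sum_congr (Finset.filter_congr fun x _ => ⟨And.right, fun h => ⟨h.le, h⟩⟩)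
      fun x hx => ?_
    rw [nextPt_filter_le hc (Finset.mem_filter.1 hx).2]
  have hhigh : rsSum F h (P.filter (c ≤ ·))
      = ∑ x ∈ P.filter (¬ · < c), F x * (h (nextPt P x) - h x) := by
    simp_rw [not_lt]
    exact Finset.sum_congr rfl fun x hx => by rw [nextPt_filter_ge (Finset.mem_filter.1 hx).2]
  rw [hlow, hhigh, rsSum, Finset.sum_filter_add_sum_filter_not]

theorem rsSum_split_nextPt (hp : p ∈ P) :
    rsSum F h P = rsSum F h (P.filter (· ≤ p)) + F p * (h (nextPt P p) - h p)
      + rsSum F h (P.filter (nextPt P p ≤ ·)) := by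
  set q := nextPt P p
  have hq : q ∈ P.filter (p ≤ ·) := Finset.mem_filter.2 ⟨nextPt_mem hp, le_nextPt P p⟩
  have hgap : (P.filter (p ≤ ·)).filter (· ≤ q) = {p, q} := by
    ext y
    simp only [Finset.mem_filter, Finset.mem_insert, Finset.mem_singleton]
    constructor
    · rintro ⟨⟨hy, hpy⟩, hyq⟩
      rcases hpy.eq_or_lt with rfl | hlt
      · exact Or.inl rfl
      · exact Or.inr (le_antisymm hyq (nextPt_le hy hlt))
    · rintro (rfl | rfl)
      · exact ⟨⟨hp, le_rfl⟩, le_nextPt P y⟩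
      · exact ⟨Finset.mem_filter.1 hq, le_rfl⟩
  have htail : (P.filter (p ≤ ·)).filter (q ≤ ·) = P.filter (q ≤ ·) := by
    rw [Finset.filter_filter]
    exact Finset.filter_congr fun y _ => ⟨And.right, fun h => ⟨(le_nextPt P p).trans h, h⟩⟩
  rw [rsSum_split hp, rsSum_split hq, hgap, htail, rsSum_pair (le_nextPt P p), add_assoc]

end RSSum

structure IsPartition (P : Finset ℝ) (a b : ℝ) : Prop where
  left_mem : a ∈ P
  right_mem : b ∈ P
  subset : ∀ x ∈ P, x ∈ Icc a b

def MeshLE (P : Finset ℝ) (μ : ℝ) : Prop :=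
  ∀ x ∈ P, nextPt P x ≤ x + μ

section Partition

variable {P Q : Finset ℝ} {a b c μ ν : ℝ}

theorem IsPartition.filter_le (hP : IsPartition P a b) (hc : c ∈ P) :
    IsPartition (P.filter (· ≤ c)) a c where
  left_mem := Finset.mem_filter.2 ⟨hP.left_mem, (hP.subset c hc).1⟩
  right_mem := Finset.mem_filter.2 ⟨hc, le_rfl⟩
  subset x hx := ⟨(hP.subset x (Finset.mem_filter.1 hx).1).1, (Finset.mem_filter.1 hx).2⟩

theorem IsPartition.filter_ge (hP : IsPartition P a b) (hc : c ∈ P) :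
    IsPartition (P.filter (c ≤ ·)) c b where
  left_mem := Finset.mem_filter.2 ⟨hc, le_rfl⟩
  right_mem := Finset.mem_filter.2 ⟨hP.right_mem, (hP.subset c hc).2⟩
  subset x hx := ⟨(Finset.mem_filter.1 hx).2, (hP.subset x (Finset.mem_filter.1 hx).1).2⟩

theorem IsPartition.union (hP : IsPartition P a b) (hQ : IsPartition Q a b) :
    IsPartition (P ∪ Q) a b where
  left_mem := Finset.mem_union_left _ hP.left_mem
  right_mem := Finset.mem_union_left _ hP.right_mem
  subset x hx := (Finset.mem_union.1 hx).elim (hP.subset x) (hQ.subset x)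

theorem IsPartition.eq_singleton (hP : IsPartition P a a) : P = {a} :=
  Finset.eq_singleton_iff_unique_mem.2
    ⟨hP.left_mem, fun x hx => le_antisymm (hP.subset x hx).2 (hP.subset x hx).1⟩

theorem IsPartition.filter_le_union (hP : IsPartition P a c) (hQ : IsPartition Q c b) :
    (P ∪ Q).filter (· ≤ c) = P := by
  ext x
  simp only [Finset.mem_filter, Finset.mem_union]
  refine ⟨fun ⟨hx, hxc⟩ => hx.elim id fun hxQ => ?_,
    fun hx => ⟨Or.inl hx, (hP.subset x hx).2⟩⟩
  rw [le_antisymm hxc (hQ.subset x hxQ).1]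
  exact hP.right_mem

theorem IsPartition.filter_ge_union (hP : IsPartition P a c) (hQ : IsPartition Q c b) :
    (P ∪ Q).filter (c ≤ ·) = Q := by
  ext x
  simp only [Finset.mem_filter, Finset.mem_union]
  refine ⟨fun ⟨hx, hcx⟩ => hx.elim (fun hxP => ?_) id,
    fun hx => ⟨Or.inr hx, (hQ.subset x hx).1⟩⟩
  rw [le_antisymm (hP.subset x hxP).2 hcx]
  exact hQ.left_mem

theorem IsPartition.union_of_adjacent (hP : IsPartition P a c) (hQ : IsPartition Q c b) :
    IsPartition (P ∪ Q) a b where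
  left_mem := Finset.mem_union_left _ hP.left_mem
  right_mem := Finset.mem_union_right _ hQ.right_mem
  subset x hx := (Finset.mem_union.1 hx).elim
    (fun hx => ⟨(hP.subset x hx).1, (hP.subset x hx).2.trans (hQ.subset c hQ.left_mem).2⟩)
    (fun hx => ⟨(hP.subset c hP.right_mem).1.trans (hQ.subset x hx).1, (hQ.subset x hx).2⟩)

theorem MeshLE.mono (hP : MeshLE P μ) (hμν : μ ≤ ν) : MeshLE P ν :=
  fun x hx => (hP x hx).trans (by linarith)

theorem MeshLE.filter_ge (hP : MeshLE P μ) : MeshLE (P.filter (c ≤ ·)) μ := fun x hx => by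
  rw [nextPt_filter_ge (Finset.mem_filter.1 hx).2]
  exact hP x (Finset.mem_filter.1 hx).1

theorem MeshLE.union_of_adjacent (hP : IsPartition P a c) (hQ : IsPartition Q c b)
    (hmP : MeshLE P μ) (hmQ : MeshLE Q μ) : MeshLE (P ∪ Q) μ := by
  intro x hx
  rcases lt_or_ge x c with hxc | hcx
  · have hxP : x ∈ P := (Finset.mem_union.1 hx).resolve_right
      fun hxQ => (hQ.subset x hxQ).1.not_gt hxc
    rw [← nextPt_filter_le (Finset.mem_union_left _ hP.right_mem) hxc, hP.filter_le_union hQ]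
    exact hmP x hxP
  · have hxQ : x ∈ (P ∪ Q).filter (c ≤ ·) := Finset.mem_filter.2 ⟨hx, hcx⟩
    rw [← nextPt_filter_ge hcx, hP.filter_ge_union hQ]
    rw [hP.filter_ge_union hQ] at hxQ
    exact hmQ x hxQ

variable {F h : ℝ → ℝ}

theorem IsPartition.rsSum_eq_zero (hP : IsPartition P a a) : rsSum F h P = 0 := by
  rw [hP.eq_singleton, rsSum_singleton]

theorem rsSum_union_of_adjacent (hP : IsPartition P a c) (hQ : IsPartition Q c b) :
    rsSum F h (P ∪ Q) = rsSum F h P + rsSum F h Q := by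
  rw [rsSum_split (Finset.mem_union_left _ hP.right_mem), hP.filter_le_union hQ,
    hP.filter_ge_union hQ]

end Partition

def HolderOn (f : ℝ → ℝ) (A γ : ℝ) (s : Set ℝ) : Prop :=
  ∀ u ∈ s, ∀ v ∈ s, |f v - f u| ≤ A * |v - u| ^ γ

section Holder

variable {f : ℝ → ℝ} {A γ a b u v : ℝ} {s t : Set ℝ}

theorem HolderOn.of_le
    (hf : ∀ u ∈ s, ∀ v ∈ s, u ≤ v → |f v - f u| ≤ A * (v - u) ^ γ) :
    HolderOn f A γ s := by
  intro u hu v hv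
  rcases le_total u v with huv | hvu
  · rw [abs_of_nonneg (sub_nonneg.2 huv)]
    exact hf u hu v hv huv
  · rw [abs_sub_comm, abs_sub_comm v, abs_of_nonneg (sub_nonneg.2 hvu)]
    exact hf v hv u hu hvu

theorem HolderOn.mono (hf : HolderOn f A γ s) (hts : t ⊆ s) : HolderOn f A γ t :=
  fun u hu v hv => hf u (hts hu) v (hts hv)

theorem HolderOn.nonneg (hf : HolderOn f A γ (Icc a b)) (hab : a < b) : 0 ≤ A := by
  have hpos : 0 < |b - a| ^ γ := Real.rpow_pos_of_pos (abs_pos.2 (sub_ne_zero.2 hab.ne')) γ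
  exact nonneg_of_mul_nonneg_left
    ((abs_nonneg _).trans (hf a (left_mem_Icc.2 hab.le) b (right_mem_Icc.2 hab.le))) hpos

theorem HolderOn.abs_sub_le (hf : HolderOn f A γ (Icc a b)) (hγ : 0 ≤ γ) (hu : u ∈ Icc a b)
    (hv : v ∈ Icc a b) : |f v - f u| ≤ A * (b - a) ^ γ := by
  rcases (hu.1.trans hu.2).eq_or_lt with rfl | hab
  · obtain rfl : u = a := le_antisymm hu.2 hu.1
    obtain rfl : v = u := le_antisymm hv.2 hv.1
    simpa using hf v hv v hv
  refine (hf u hu v hv).trans (mul_le_mul_of_nonneg_left ?_ (hf.nonneg hab))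
  exact Real.rpow_le_rpow (abs_nonneg _)
    (abs_sub_le_iff.2 ⟨by linarith [hu.1, hv.2], by linarith [hu.2, hv.1]⟩) hγ

end Holder

-- The fixed point of `K ↦ 2 ^ (1 - θ) * K + 2`, the recursion produced by halving the interval.
noncomputable def sewingConst (θ : ℝ) : ℝ := 2 / (1 - 2 ^ (1 - θ))

section SewingConst

variable {θ : ℝ}

theorem sewingConst_pos (hθ : 1 < θ) : 0 < sewingConst θ :=
  div_pos two_pos (sub_pos.2 (Real.rpow_lt_one_of_one_lt_of_neg one_lt_two (by linarith)))

theorem sewingConst_halving (hθ : 1 < θ) {L : ℝ} (hL : 0 ≤ L) :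
    2 * (sewingConst θ * (L / 2) ^ θ) + 2 * L ^ θ = sewingConst θ * L ^ θ := by
  have hlt : (2 : ℝ) ^ (1 - θ) < 1 := Real.rpow_lt_one_of_one_lt_of_neg one_lt_two (by linarith)
  have hhalf : 2 * (L / 2) ^ θ = 2 ^ (1 - θ) * L ^ θ := by
    rw [Real.div_rpow hL zero_le_two, Real.rpow_sub two_pos, Real.rpow_one]
    field_simp
  rw [sewingConst, mul_left_comm, hhalf]
  field_simp [(sub_pos.2 hlt).ne']
  ring

end SewingConst

theorem IsPartition.exists_nextPt_gt {P : Finset ℝ} {a b m : ℝ} (hP : IsPartition P a b)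
    (ham : a ≤ m) (hmb : m < b) :
    ∃ p ∈ P, a ≤ p ∧ p ≤ m ∧ m < nextPt P p ∧ nextPt P p ≤ b := by
  have ha : a ∈ P.filter (· ≤ m) := Finset.mem_filter.2 ⟨hP.left_mem, ham⟩
  set p := (P.filter (· ≤ m)).max' ⟨a, ha⟩
  obtain ⟨hpP, hpm⟩ := Finset.mem_filter.1 (Finset.max'_mem _ ⟨a, ha⟩)
  have hpb : p < b := hpm.trans_lt hmb
  refine ⟨p, hpP, Finset.le_max' _ a ha, hpm, ?_, nextPt_le hP.right_mem hpb⟩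
  by_contra! hle
  obtain ⟨hqP, hpq⟩ := nextPt_mem_of_lt hP.right_mem hpb
  exact hpq.not_ge (Finset.le_max' _ _ (Finset.mem_filter.2 ⟨hqP, hle⟩))

section Sewing

variable {F h : ℝ → ℝ} {P Q U : Finset ℝ} {A B γ δ a b μ ν : ℝ}

theorem abs_sub_mul_sub_le {u v w : ℝ} (hγ : 0 ≤ γ) (hδ : 0 ≤ δ) (hab : a < b)
    (hF : HolderOn F A γ (Icc a b)) (hh : HolderOn h B δ (Icc a b))
    (hu : u ∈ Icc a b) (hv : v ∈ Icc a b) (hw : w ∈ Icc a b) :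
    |(F v - F u) * (h w - h v)| ≤ A * B * (b - a) ^ (γ + δ) := by
  rw [abs_mul, Real.rpow_add (sub_pos.2 hab), mul_mul_mul_comm]
  exact mul_le_mul (hF.abs_sub_le hγ hu hv) (hh.abs_sub_le hδ hv hw) (abs_nonneg _)
    (mul_nonneg (hF.nonneg hab) (Real.rpow_nonneg (sub_nonneg.2 hab.le) _))

theorem abs_rsSum_sub_le (hγ : 0 ≤ γ) (hδ : 0 ≤ δ) (hθ : 1 < γ + δ)
    (hP : IsPartition P a b) (hF : HolderOn F A γ (Icc a b)) (hh : HolderOn h B δ (Icc a b)) :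
    |rsSum F h P - F a * (h b - h a)|
      ≤ sewingConst (γ + δ) * (A * B) * (b - a) ^ (γ + δ) := by
  induction P using Finset.strongInduction generalizing a b with
  | H P ih =>
  rcases (hP.subset a hP.left_mem).2.eq_or_lt with rfl | hab
  · simp [hP.rsSum_eq_zero, Real.zero_rpow (by linarith : (0 : ℝ) < γ + δ).ne']
  obtain ⟨p, hpP, hap, hpm, hmq, hqb⟩ :=
    hP.exists_nextPt_gt (m := (a + b) / 2) (by linarith) (by linarith)
  set q := nextPt P p with hq
  set K := sewingConst (γ + δ)
  have hKAB : 0 ≤ K * (A * B) :=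
    mul_nonneg (sewingConst_pos hθ).le (mul_nonneg (hF.nonneg hab) (hh.nonneg hab))
  have hpb : p ≤ b := by linarith
  have haq : a ≤ q := by linarith
  have hleft := ih (P.filter (· ≤ p))
    (Finset.filter_ssubset.2 ⟨b, hP.right_mem, not_le.2 (by linarith : p < b)⟩)
    (hP.filter_le hpP) (hF.mono (Icc_subset_Icc_right hpb)) (hh.mono (Icc_subset_Icc_right hpb))
  have hright := ih (P.filter (q ≤ ·))
    (Finset.filter_ssubset.2 ⟨a, hP.left_mem, not_le.2 (by linarith : a < q)⟩)
    (hP.filter_ge (nextPt_mem hpP)) (hF.mono (Icc_subset_Icc_left haq))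
    (hh.mono (Icc_subset_Icc_left haq))
  have hhalf : ∀ x, 0 ≤ x → x ≤ (b - a) / 2 → K * (A * B) * x ^ (γ + δ)
      ≤ K * (A * B) * ((b - a) / 2) ^ (γ + δ) := fun x hx hxle => by gcongr
  have hmem := hP.subset
  calc |rsSum F h P - F a * (h b - h a)|
      = |(rsSum F h (P.filter (· ≤ p)) - F a * (h p - h a))
          + (rsSum F h (P.filter (q ≤ ·)) - F q * (h b - h q))
          + ((F p - F a) * (h q - h p) + (F q - F a) * (h b - h q))| := by
        rw [rsSum_split_nextPt hpP, ← hq]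
        ring_nf
    _ ≤ |rsSum F h (P.filter (· ≤ p)) - F a * (h p - h a)|
          + |rsSum F h (P.filter (q ≤ ·)) - F q * (h b - h q)|
          + (|(F p - F a) * (h q - h p)| + |(F q - F a) * (h b - h q)|) :=
        (abs_add_le _ _).trans (add_le_add (abs_add_le _ _) (abs_add_le _ _))
    _ ≤ K * (A * B) * ((b - a) / 2) ^ (γ + δ) + K * (A * B) * ((b - a) / 2) ^ (γ + δ)
          + (A * B * (b - a) ^ (γ + δ) + A * B * (b - a) ^ (γ + δ)) := by
        gcongr
        · exact hleft.trans (hhalf _ (by linarith) (by linarith))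
        · exact hright.trans (hhalf _ (by linarith) (by linarith))
        · exact abs_sub_mul_sub_le hγ hδ hab hF hh (hmem a hP.left_mem) (hmem p hpP)
            (hmem q (nextPt_mem hpP))
        · exact abs_sub_mul_sub_le hγ hδ hab hF hh (hmem a hP.left_mem)
            (hmem q (nextPt_mem hpP)) (hmem b hP.right_mem)
    _ = K * (A * B) * (b - a) ^ (γ + δ) := by
        linear_combination (A * B) * sewingConst_halving hθ (sub_nonneg.2 hab.le)

theorem abs_rsSum_sub_rsSum_le_of_subset (hγ : 0 ≤ γ) (hδ : 0 ≤ δ) (hθ : 1 < γ + δ)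
    (hP : IsPartition P a b) (hU : IsPartition U a b) (hPU : P ⊆ U) (hmesh : MeshLE P μ)
    (hF : HolderOn F A γ (Icc a b)) (hh : HolderOn h B δ (Icc a b)) :
    |rsSum F h U - rsSum F h P|
      ≤ sewingConst (γ + δ) * (A * B) * μ ^ (γ + δ - 1) * (b - a) := by
  induction P using Finset.strongInduction generalizing a U with
  | H P ih =>
  rcases (hP.subset a hP.left_mem).2.eq_or_lt with rfl | hab
  · simp [hP.rsSum_eq_zero, hU.rsSum_eq_zero]
  obtain ⟨hqP, haq⟩ := nextPt_mem_of_lt hP.right_mem hab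
  have hqb := nextPt_le hP.right_mem hab
  have hkey := abs_rsSum_sub_le hγ hδ hθ (hU.filter_le (hPU hqP))
    (hF.mono (Icc_subset_Icc_right hqb)) (hh.mono (Icc_subset_Icc_right hqb))
  have hPsplit := rsSum_split_nextPt (F := F) (h := h) hP.left_mem
  rw [(hP.filter_le hP.left_mem).rsSum_eq_zero, zero_add] at hPsplit
  have hqμ := hmesh a hP.left_mem
  set q := nextPt P a
  set K := sewingConst (γ + δ)
  have hKAB : 0 ≤ K * (A * B) :=
    mul_nonneg (sewingConst_pos hθ).le (mul_nonneg (hF.nonneg hab) (hh.nonneg hab))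
  have hfirst : (q - a) ^ (γ + δ) ≤ μ ^ (γ + δ - 1) * (q - a) :=
    calc (q - a) ^ (γ + δ) = (q - a) ^ (γ + δ - 1) * (q - a) := by
          rw [← Real.rpow_add_one (sub_pos.2 haq).ne', sub_add_cancel]
      _ ≤ μ ^ (γ + δ - 1) * (q - a) := by gcongr; linarith
  have hrest := ih (P.filter (q ≤ ·))
    (Finset.filter_ssubset.2 ⟨a, hP.left_mem, not_le.2 haq⟩)
    (hP.filter_ge hqP) (hU.filter_ge (hPU hqP)) (Finset.filter_subset_filter _ hPU)
    hmesh.filter_ge (hF.mono (Icc_subset_Icc_left haq.le))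
    (hh.mono (Icc_subset_Icc_left haq.le))
  calc |rsSum F h U - rsSum F h P|
      = |(rsSum F h (U.filter (· ≤ q)) - F a * (h q - h a))
          + (rsSum F h (U.filter (q ≤ ·)) - rsSum F h (P.filter (q ≤ ·)))| := by
        rw [hPsplit, rsSum_split (hPU hqP)]
        ring_nf
    _ ≤ K * (A * B) * (μ ^ (γ + δ - 1) * (q - a))
          + K * (A * B) * μ ^ (γ + δ - 1) * (b - q) :=
        (abs_add_le _ _).trans (add_le_add (hkey.trans (by gcongr)) hrest)
    _ = K * (A * B) * μ ^ (γ + δ - 1) * (b - a) := by ring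

theorem abs_rsSum_sub_rsSum_le (hγ : 0 ≤ γ) (hδ : 0 ≤ δ) (hθ : 1 < γ + δ)
    (hP : IsPartition P a b) (hQ : IsPartition Q a b) (hmP : MeshLE P μ) (hmQ : MeshLE Q ν)
    (hF : HolderOn F A γ (Icc a b)) (hh : HolderOn h B δ (Icc a b)) :
    |rsSum F h P - rsSum F h Q| ≤ sewingConst (γ + δ) * (A * B) * μ ^ (γ + δ - 1) * (b - a)
      + sewingConst (γ + δ) * (A * B) * ν ^ (γ + δ - 1) * (b - a) := by
  have hPQ := hP.union hQ
  have hP' :=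
    abs_rsSum_sub_rsSum_le_of_subset hγ hδ hθ hP hPQ Finset.subset_union_left hmP hF hh
  have hQ' :=
    abs_rsSum_sub_rsSum_le_of_subset hγ hδ hθ hQ hPQ Finset.subset_union_right hmQ hF hh
  calc |rsSum F h P - rsSum F h Q|
      = |(rsSum F h (P ∪ Q) - rsSum F h Q) - (rsSum F h (P ∪ Q) - rsSum F h P)| := by ring_nf
    _ ≤ _ := (abs_sub _ _).trans (by linarith)

end Sewing

theorem IsPartition.meshLE {P : Finset ℝ} {a b : ℝ} (hP : IsPartition P a b) :
    MeshLE P (b - a) := fun x hx => by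
  linarith [(hP.subset _ (nextPt_mem hx)).2, (hP.subset x hx).1]

theorem isPartition_pair {a b : ℝ} (hab : a ≤ b) : IsPartition {a, b} a b where
  left_mem := by simp
  right_mem := by simp
  subset x hx := by
    rcases Finset.mem_insert.1 hx with rfl | hx
    · exact left_mem_Icc.2 hab
    · rw [Finset.mem_singleton.1 hx]
      exact right_mem_Icc.2 hab

section Image

variable {x : ℕ → ℝ} {n k : ℕ}

theorem nextPt_image_range (hx : StrictMono x) (hk : k < n) :
    nextPt ((Finset.range (n + 1)).image x) (x k) = x (k + 1) := by
  refine nextPt_eq_of_forall (Finset.mem_image_of_mem _ (Finset.mem_range.2 (by omega)))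
    (hx k.lt_succ_self) ?_
  rintro _ hy hky
  obtain ⟨j, -, rfl⟩ := Finset.mem_image.1 hy
  exact hx.monotone (hx.lt_iff_lt.1 hky)

theorem nextPt_image_range_last (hx : Monotone x) (n : ℕ) :
    nextPt ((Finset.range (n + 1)).image x) (x n) = x n := by
  refine nextPt_of_forall_le fun y hy => ?_
  obtain ⟨j, hj, rfl⟩ := Finset.mem_image.1 hy
  exact hx (Nat.lt_succ_iff.1 (Finset.mem_range.1 hj))

theorem rsSum_image_range (F h : ℝ → ℝ) (hx : StrictMono x) (n : ℕ) :
    rsSum F h ((Finset.range (n + 1)).image x)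
      = ∑ k ∈ Finset.range n, F (x k) * (h (x (k + 1)) - h (x k)) := by
  rw [rsSum, Finset.sum_image fun _ _ _ _ hij => hx.injective hij, Finset.sum_range_succ,
    nextPt_image_range_last hx.monotone, sub_self, mul_zero, add_zero]
  exact Finset.sum_congr rfl fun k hk => by rw [nextPt_image_range hx (Finset.mem_range.1 hk)]

theorem meshLE_image_range {μ : ℝ} (hx : StrictMono x) (hμ : ∀ k, x (k + 1) ≤ x k + μ) :
    MeshLE ((Finset.range (n + 1)).image x) μ := by
  intro y hy
  obtain ⟨k, hk, rfl⟩ := Finset.mem_image.1 hy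
  rcases (Nat.lt_succ_iff.1 (Finset.mem_range.1 hk)).lt_or_eq with hk | rfl
  · rw [nextPt_image_range hx hk]
    exact hμ k
  · rw [nextPt_image_range_last hx.monotone]
    linarith [hμ k, hx k.lt_succ_self]

end Image

noncomputable def uniformPartition (a b : ℝ) (n : ℕ) : Finset ℝ :=
  (Finset.range (n + 1)).image fun k : ℕ => a + k * (b - a) / n

section Uniform

variable {F h : ℝ → ℝ} {a b : ℝ} {n : ℕ}

theorem strictMono_uniform (hab : a < b) (hn : n ≠ 0) :
    StrictMono fun k : ℕ => a + k * (b - a) / n := fun j k hjk => by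
  have hn' : (0 : ℝ) < n := Nat.cast_pos.2 (Nat.pos_of_ne_zero hn)
  have hjk' : (j : ℝ) < k := Nat.cast_lt.2 hjk
  dsimp only
  gcongr

theorem isPartition_uniformPartition (hab : a ≤ b) (hn : n ≠ 0) :
    IsPartition (uniformPartition a b n) a b where
  left_mem := Finset.mem_image.2 ⟨0, by simp⟩
  right_mem := Finset.mem_image.2 ⟨n, by simp, by field_simp; ring⟩
  subset x hx := by
    obtain ⟨k, hk, rfl⟩ := Finset.mem_image.1 hx
    have hkn : (k : ℝ) ≤ n := Nat.cast_le.2 (Nat.lt_succ_iff.1 (Finset.mem_range.1 hk))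
    have hn' : (0 : ℝ) < n := Nat.cast_pos.2 (Nat.pos_of_ne_zero hn)
    have hstep : k * (b - a) / n ≤ b - a := by
      rw [div_le_iff₀ hn']
      nlinarith [sub_nonneg.2 hab]
    have hstep' : 0 ≤ k * (b - a) / n := by positivity
    exact ⟨by linarith, by linarith⟩

theorem meshLE_uniformPartition (hab : a < b) (hn : n ≠ 0) :
    MeshLE (uniformPartition a b n) ((b - a) / n) :=
  meshLE_image_range (strictMono_uniform hab hn) fun k => le_of_eq (by push_cast; ring)

theorem rsSum_uniformPartition (hab : a < b) (hn : n ≠ 0) :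
    rsSum F h (uniformPartition a b n) = ∑ k ∈ Finset.range n,
      F (a + k * (b - a) / n) * (h (a + (k + 1) * (b - a) / n) - h (a + k * (b - a) / n)) := by
  rw [uniformPartition, rsSum_image_range F h (strictMono_uniform hab hn)]
  push_cast
  rfl

end Uniform

theorem tendsto_mul_rpow_sub_one_mul {ι : Type*} {l : Filter ι} {μ : ι → ℝ} {θ : ℝ}
    (hθ : 1 < θ) (hμ : Tendsto μ l (𝓝 0)) (c d : ℝ) :
    Tendsto (fun i => c * μ i ^ (θ - 1) * d) l (𝓝 0) := by
  simpa using ((hμ.rpow_const_nhds_zero (sub_pos.2 hθ)).const_mul c).mul_const d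

theorem RS_self (F h : ℝ → ℝ) (a : ℝ) : RS F h a a = 0 := by
  simp only [RS, sub_self, mul_zero, zero_div, add_zero, Finset.sum_const_zero]
  exact tendsto_const_nhds.limUnder_eq

theorem RS_one (h : ℝ → ℝ) (a b : ℝ) : RS (fun _ => 1) h a b = h b - h a := by
  refine Tendsto.limUnder_eq (tendsto_const_nhds.congr' ?_)
  filter_upwards [eventually_ne_atTop 0] with n hn
  have htel := Finset.sum_range_sub (fun k : ℕ => h (a + k * (b - a) / n)) n
  push_cast at htel
  simp only [one_mul]
  rw [htel, mul_div_cancel_left₀ _ (Nat.cast_ne_zero.2 hn), zero_mul, zero_div, add_zero,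
    add_sub_cancel]

section YoungIntegral

variable {F h : ℝ → ℝ} {P : Finset ℝ} {A B γ δ a b c μ : ℝ}

theorem tendsto_rsSum_uniformPartition (hγ : 0 ≤ γ) (hδ : 0 ≤ δ) (hθ : 1 < γ + δ)
    (hab : a < b) (hF : HolderOn F A γ (Icc a b)) (hh : HolderOn h B δ (Icc a b)) :
    Tendsto (fun n : ℕ => rsSum F h (uniformPartition a b n)) atTop (𝓝 (RS F h a b)) := by
  set u := fun n : ℕ => rsSum F h (uniformPartition a b n)
  set E := fun n : ℕ => sewingConst (γ + δ) * (A * B) * ((b - a) / n) ^ (γ + δ - 1) * (b - a)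
  have hE : Tendsto E atTop (𝓝 0) :=
    tendsto_mul_rpow_sub_one_mul hθ (tendsto_const_div_atTop_nhds_zero_nat _) _ _
  have hdist : ∀ m n, m ≠ 0 → n ≠ 0 → dist (u n) (u m) ≤ E n + E m := fun m n hm hn =>
    abs_rsSum_sub_rsSum_le hγ hδ hθ (isPartition_uniformPartition hab.le hn)
      (isPartition_uniformPartition hab.le hm) (meshLE_uniformPartition hab hn)
      (meshLE_uniformPartition hab hm) hF hh
  have hcauchy : CauchySeq u := by
    refine Metric.cauchySeq_iff'.2 fun ε hε => ?_
    obtain ⟨N, hN⟩ := eventually_atTop.1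
      ((hE.eventually (gt_mem_nhds (half_pos hε))).and (eventually_ne_atTop 0))
    refine ⟨N, fun n hn => (hdist N n (hN N le_rfl).2 (hN n hn).2).trans_lt ?_⟩
    linarith [(hN n hn).1, (hN N le_rfl).1]
  obtain ⟨L, hL⟩ := cauchySeq_tendsto_of_complete hcauchy
  have hRS : RS F h a b = L := (hL.congr' ((eventually_ne_atTop 0).mono
    fun n hn => rsSum_uniformPartition hab hn)).limUnder_eq
  rwa [hRS]

theorem abs_rsSum_sub_RS_le (hγ : 0 ≤ γ) (hδ : 0 ≤ δ) (hθ : 1 < γ + δ) (hab : a < b)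
    (hP : IsPartition P a b) (hmesh : MeshLE P μ)
    (hF : HolderOn F A γ (Icc a b)) (hh : HolderOn h B δ (Icc a b)) :
    |rsSum F h P - RS F h a b|
      ≤ sewingConst (γ + δ) * (A * B) * μ ^ (γ + δ - 1) * (b - a) := by
  have hlim := ((tendsto_rsSum_uniformPartition hγ hδ hθ hab hF hh).const_sub (rsSum F h P)).abs
  have hbound := (tendsto_mul_rpow_sub_one_mul hθ (tendsto_const_div_atTop_nhds_zero_nat (b - a))
    (sewingConst (γ + δ) * (A * B)) (b - a)).const_add
    (sewingConst (γ + δ) * (A * B) * μ ^ (γ + δ - 1) * (b - a))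
  rw [add_zero] at hbound
  refine le_of_tendsto_of_tendsto hlim hbound ((eventually_ne_atTop 0).mono fun n hn => ?_)
  exact abs_rsSum_sub_rsSum_le hγ hδ hθ hP (isPartition_uniformPartition hab.le hn) hmesh
    (meshLE_uniformPartition hab hn) hF hh

theorem tendsto_rsSum_RS {ι : Type*} {l : Filter ι} {P : ι → Finset ℝ} {μ : ι → ℝ}
    (hγ : 0 ≤ γ) (hδ : 0 ≤ δ) (hθ : 1 < γ + δ) (hab : a < b)
    (hF : HolderOn F A γ (Icc a b)) (hh : HolderOn h B δ (Icc a b))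
    (hP : ∀ᶠ i in l, IsPartition (P i) a b ∧ MeshLE (P i) (μ i))
    (hμ : Tendsto μ l (𝓝 0)) :
    Tendsto (fun i => rsSum F h (P i)) l (𝓝 (RS F h a b)) :=
  tendsto_iff_norm_sub_tendsto_zero.2 <| squeeze_zero_norm'
    (hP.mono fun _ hi => by simpa using abs_rsSum_sub_RS_le hγ hδ hθ hab hi.1 hi.2 hF hh)
    (tendsto_mul_rpow_sub_one_mul hθ hμ _ _)

theorem RS_add (hγ : 0 ≤ γ) (hδ : 0 ≤ δ) (hθ : 1 < γ + δ)
    (hF : HolderOn F A γ (Icc a b)) (hh : HolderOn h B δ (Icc a b))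
    (hac : a ≤ c) (hcb : c ≤ b) :
    RS F h a c + RS F h c b = RS F h a b := by
  rcases hac.eq_or_lt with rfl | hac
  · rw [RS_self, zero_add]
  rcases hcb.eq_or_lt with rfl | hcb
  · rw [RS_self, add_zero]
  have hab := hac.trans hcb
  have hsum := (tendsto_rsSum_uniformPartition hγ hδ hθ hac
    (hF.mono (Icc_subset_Icc_right hcb.le)) (hh.mono (Icc_subset_Icc_right hcb.le))).add
    (tendsto_rsSum_uniformPartition hγ hδ hθ hcb
      (hF.mono (Icc_subset_Icc_left hac.le)) (hh.mono (Icc_subset_Icc_left hac.le)))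
  refine tendsto_nhds_unique (hsum.congr' ?_) (tendsto_rsSum_RS hγ hδ hθ hab hF hh
    (P := fun n => uniformPartition a c n ∪ uniformPartition c b n) ?_
    (tendsto_const_div_atTop_nhds_zero_nat (b - a)))
  all_goals filter_upwards [eventually_ne_atTop 0] with n hn
  · exact (rsSum_union_of_adjacent (isPartition_uniformPartition hac.le hn)
      (isPartition_uniformPartition hcb.le hn)).symm
  · exact ⟨(isPartition_uniformPartition hac.le hn).union_of_adjacent
        (isPartition_uniformPartition hcb.le hn),
      MeshLE.union_of_adjacent (isPartition_uniformPartition hac.le hn)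
        (isPartition_uniformPartition hcb.le hn)
        ((meshLE_uniformPartition hac hn).mono (by gcongr))
        ((meshLE_uniformPartition hcb hn).mono (by gcongr))⟩

theorem abs_RS_sub_le (hγ : 0 ≤ γ) (hδ : 0 ≤ δ) (hθ : 1 < γ + δ) (hab : a < b)
    (hF : HolderOn F A γ (Icc a b)) (hh : HolderOn h B δ (Icc a b)) :
    |RS F h a b - F a * (h b - h a)| ≤ sewingConst (γ + δ) * (A * B) * (b - a) ^ (γ + δ) := by
  have hpair := abs_rsSum_sub_RS_le hγ hδ hθ hab (isPartition_pair hab.le)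
    (isPartition_pair hab.le).meshLE hF hh
  have hpow : (b - a) ^ (γ + δ - 1) * (b - a) = (b - a) ^ (γ + δ) := by
    rw [Real.rpow_sub_one (sub_pos.2 hab).ne', div_mul_cancel₀ _ (sub_pos.2 hab).ne']
  rwa [rsSum_pair hab.le, abs_sub_comm, mul_assoc _ (_ ^ _), hpow] at hpair

theorem abs_RS_sub_RS_le {lo hi t t' : ℝ} (hγ : 0 ≤ γ) (hδ : 0 < δ) (hθ : 1 < γ + δ)
    (hF : HolderOn F A γ (Icc lo hi)) (hh : HolderOn h B δ (Icc lo hi)) (hF0 : F lo = 0)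
    (ht : lo ≤ t) (htt' : t ≤ t') (ht' : t' ≤ hi) :
    |RS F h lo t' - RS F h lo t|
      ≤ (1 + sewingConst (γ + δ)) * (A * (hi - lo) ^ γ) * (B * (t' - t) ^ δ) := by
  rcases htt'.eq_or_lt with rfl | htt'
  · simp [Real.zero_rpow hδ.ne']
  have hlohi : lo < hi := by linarith
  have hsub : Icc t t' ⊆ Icc lo hi := Icc_subset_Icc ht ht'
  have hA := hF.nonneg hlohi
  have hKAB : 0 ≤ sewingConst (γ + δ) * (A * B) :=
    mul_nonneg (sewingConst_pos hθ).le (mul_nonneg hA (hh.nonneg hlohi))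
  rw [← RS_add hγ hδ.le hθ (hF.mono (Icc_subset_Icc_right ht'))
    (hh.mono (Icc_subset_Icc_right ht')) ht htt'.le, add_sub_cancel_left]
  have hgerm := abs_RS_sub_le hγ hδ.le hθ htt' (hF.mono hsub) (hh.mono hsub)
  have hFt : |F t| ≤ A * (hi - lo) ^ γ := by
    simpa [hF0] using hF.abs_sub_le hγ (left_mem_Icc.2 hlohi.le) ⟨ht, htt'.le.trans ht'⟩
  have hht : |h t' - h t| ≤ B * (t' - t) ^ δ := by
    simpa [abs_of_pos (sub_pos.2 htt')] using hh t (hsub (left_mem_Icc.2 htt'.le)) t'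
      (hsub (right_mem_Icc.2 htt'.le))
  have hpow : (t' - t) ^ (γ + δ) ≤ (hi - lo) ^ γ * (t' - t) ^ δ := by
    rw [Real.rpow_add (sub_pos.2 htt')]
    gcongr
  calc |RS F h t t'|
      ≤ |F t| * |h t' - h t| + |RS F h t t' - F t * (h t' - h t)| := by
        rw [← abs_mul]
        linarith [abs_sub_abs_le_abs_sub (RS F h t t') (F t * (h t' - h t))]
    _ ≤ A * (hi - lo) ^ γ * (B * (t' - t) ^ δ)
          + sewingConst (γ + δ) * (A * B) * ((hi - lo) ^ γ * (t' - t) ^ δ) := by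
        gcongr
        exact hgerm.trans (by gcongr)
    _ = (1 + sewingConst (γ + δ)) * (A * (hi - lo) ^ γ) * (B * (t' - t) ^ δ) := by ring

end YoungIntegral

theorem Fin.sum_univ_erase_last {M : Type*} [AddCommMonoid M] {n : ℕ} (f : Fin (n + 1) → M) :
    ∑ j ∈ Finset.univ.erase (Fin.last n), f j = ∑ j : Fin n, f j.castSucc := by
  have herase : Finset.univ.erase (Fin.last n) = Finset.Iio (Fin.last n) := by
    ext j
    simp only [Finset.mem_erase, Finset.mem_univ, and_true, Finset.mem_Iio,
      Fin.lt_last_iff_ne_last]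
  rw [herase, Fin.Iio_last_eq_map, Finset.sum_map]
  rfl

/-- Lemma 8.1: bound for iterated Young integrals. If `g^j` is `β_j`-Hölder on `[s,s']` with
`β_j ∈ (1/2,1]`, then for `t ≤ t'` in `[s,s']`,
`|g^α_{s,t'} − g^α_{s,t}| ≤ K (Π_j ‖g^j‖_{β_j}) (s'−s)^{β₁+⋯+β_{r-1}} (t'−t)^{β_r}`,
where `K` depends only on `r` and the exponents. Here the innermost integrator carries
index `0` and the outermost carries index `Fin.last r`. -/
theorem iterated_integral_increment_bound (r : ℕ) (β : Fin (r + 1) → ℝ)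
    (hβ : ∀ j, 1 / 2 < β j ∧ β j ≤ 1) :
    ∃ K : ℝ, 0 < K ∧ ∀ (s s' : ℝ) (g : Fin (r + 1) → ℝ → ℝ) (C : Fin (r + 1) → ℝ),
      s ≤ s' →
      (∀ j, ∀ u ∈ Set.Icc s s', ∀ v ∈ Set.Icc s s',
        |g j v - g j u| ≤ C j * |v - u| ^ β j) →
      ∀ t ∈ Set.Icc s s', ∀ t' ∈ Set.Icc s s', t ≤ t' →
      |iterRS (r + 1) g s t' - iterRS (r + 1) g s t|
        ≤ K * (∏ j, C j)
            * (s' - s) ^ (∑ j ∈ Finset.univ.erase (Fin.last r), β j)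
            * (t' - t) ^ β (Fin.last r) := by
  induction r with
  | zero =>
    refine ⟨1, one_pos, fun s s' g C _ hg t ht t' ht' htt' => ?_⟩
    have hiter : ∀ u, iterRS 1 g s u = g 0 u - g 0 s := fun u => RS_one _ s u
    rw [hiter, hiter, sub_sub_sub_cancel_right]
    simpa [abs_of_nonneg (sub_nonneg.2 htt')] using hg 0 t ht t' ht'
  | succ r ih =>
    obtain ⟨K, hK, hbound⟩ := ih (fun j => β j.castSucc) fun j => hβ j.castSucc
    have hγ := (hβ (Fin.last r).castSucc).1
    have hθ : 1 < β (Fin.last r).castSucc + β (Fin.last (r + 1)) := by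
      linarith [(hβ (Fin.last (r + 1))).1]
    refine ⟨(1 + sewingConst (β (Fin.last r).castSucc + β (Fin.last (r + 1)))) * K,
      mul_pos (by linarith [sewingConst_pos hθ]) hK, ?_⟩
    intro s s' g C hss' hg t ht t' ht' htt'
    have hF : HolderOn (iterRS (r + 1) (fun i => g i.castSucc) s)
        (K * (∏ j : Fin (r + 1), C j.castSucc)
          * (s' - s) ^ (∑ j ∈ Finset.univ.erase (Fin.last r), β j.castSucc))
        (β (Fin.last r).castSucc) (Icc s s') :=
      HolderOn.of_le fun u hu v hv huv =>
        hbound s s' _ _ hss' (fun j => hg j.castSucc) u hu v hv huv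
    have hinc := abs_RS_sub_RS_le (by linarith) (by linarith [(hβ (Fin.last (r + 1))).1]) hθ hF
      (hg (Fin.last _)) (RS_self _ _ s) ht.1 htt' ht'.2
    refine hinc.trans_eq ?_
    have hsum : 0 < ∑ j : Fin r, β j.castSucc.castSucc + β (Fin.last r).castSucc :=
      add_pos_of_nonneg_of_pos
        (Finset.sum_nonneg fun j _ => by linarith [(hβ j.castSucc.castSucc).1]) (by linarith)
    rw [Fin.prod_univ_castSucc C, Fin.sum_univ_erase_last, Fin.sum_univ_erase_last,
      Fin.sum_univ_castSucc, Real.rpow_add' (sub_nonneg.2 hss') hsum.ne']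
    ring
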